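/- If X is elliptically symmetric in ℝ^d with mean μ₀, nonsingular covariance Σ₀, and E[X | β⊤X] exists for β ∈ ℝ^d with β⊤Σ₀β ≠ 0, then E[X | β⊤X] = μ₀ + (β⊤(X − μ₀)/(β⊤Σ₀β)) Σ₀β almost surely. -/

import Mathlib

open MeasureTheory
open scoped ProbabilityTheory RealInnerProductSpace

/-- A random vector is spherically symmetric if its distribution is invariant under
all orthogonal transformations (linear isometries) of `ℝ^d`. -/
def IsSphericallySymmetric {Ω : Type*} [MeasurableSpace Ω] {d : ℕ}
    (μ : Measure Ω) (X : Ω → EuclideanSpace ℝ (Fin d)) : Prop :=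
  ∀ L : EuclideanSpace ℝ (Fin d) ≃ₗᵢ[ℝ] EuclideanSpace ℝ (Fin d),
    Measure.map (fun ω => L (X ω)) μ = Measure.map X μ

/-!
Put `α = Σ₀^{1/2} β`. Then `β⊤X = β⊤μ₀ + ⟪α, Y⟫` generates the same σ-algebra as `⟪α, Y⟫`,
and conditional expectation commutes with the affine map `y ↦ μ₀ + Σ₀^{1/2} y`, so it suffices
that `E[Y | ⟪α, Y⟫]` is the orthogonal projection of `Y` onto `ℝ α`. For `w ⊥ α`, the reflection
in `w^⊥` preserves the law of `Y` and the value of `⟪α, Y⟫` but flips the sign of `⟪w, Y⟫`;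
hence `⟪w, Y⟫` integrates to zero over every event determined by `⟪α, Y⟫`.
-/

theorem MeasurableEquiv.comap_comp_eq {α β γ : Type*} [MeasurableSpace β] [MeasurableSpace γ]
    (e : β ≃ᵐ γ) (f : α → β) :
    MeasurableSpace.comap (e ∘ f) inferInstance = MeasurableSpace.comap f inferInstance := by
  rw [← MeasurableSpace.comap_comp, e.measurableEmbedding.comap_eq]

theorem Submodule.inner_reflection_left_eq_right {𝕜 E : Type*} [RCLike 𝕜] [NormedAddCommGroup E]
    [InnerProductSpace 𝕜 E] (K : Submodule 𝕜 E) [K.HasOrthogonalProjection] (x y : E) :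
    inner 𝕜 (K.reflection x) y = inner 𝕜 x (K.reflection y) := by
  conv_lhs => rw [← K.reflection_reflection y]
  exact K.reflection.inner_map_map x (K.reflection y)

namespace IsSphericallySymmetric

variable {Ω : Type*} [MeasurableSpace Ω] {μ : Measure Ω} {d : ℕ}
  {Y : Ω → EuclideanSpace ℝ (Fin d)}

theorem integral_comp_eq_zero_of_odd {G : Type*} [NormedAddCommGroup G] [NormedSpace ℝ G]
    [CompleteSpace G] (hsph : IsSphericallySymmetric μ Y) (hY : Measurable Y)
    (L : EuclideanSpace ℝ (Fin d) ≃ₗᵢ[ℝ] EuclideanSpace ℝ (Fin d))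
    {F : EuclideanSpace ℝ (Fin d) → G} (hF : StronglyMeasurable F)
    (hodd : ∀ y, F (L y) = -F y) :
    ∫ ω, F (Y ω) ∂μ = 0 := by
  have hinv : ∫ ω, F (L (Y ω)) ∂μ = ∫ ω, F (Y ω) ∂μ := calc
    _ = ∫ y, F y ∂(μ.map fun ω => L (Y ω)) :=
      (integral_map (L.continuous.measurable.comp hY).aemeasurable hF.aestronglyMeasurable).symm
    _ = ∫ y, F y ∂(μ.map Y) := by rw [hsph L]
    _ = ∫ ω, F (Y ω) ∂μ := integral_map hY.aemeasurable hF.aestronglyMeasurable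
  simp_rw [hodd, integral_neg] at hinv
  have htwice : (2 : ℝ) • ∫ ω, F (Y ω) ∂μ = 0 := by
    rw [two_smul]
    nth_rewrite 1 [← hinv]
    exact neg_add_cancel _
  exact (smul_eq_zero.mp htwice).resolve_left two_ne_zero

theorem setIntegral_inner_eq_zero_of_inner_eq_zero (hsph : IsSphericallySymmetric μ Y)
    (hY : Measurable Y) {α w : EuclideanSpace ℝ (Fin d)} (hαw : ⟪α, w⟫ = 0) {B : Set ℝ}
    (hB : MeasurableSet B) :
    ∫ ω in (fun ω => ⟪α, Y ω⟫) ⁻¹' B, ⟪w, Y ω⟫ ∂μ = 0 := by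
  set R := (ℝ ∙ w)ᗮ.reflection
  set S := (fun y => ⟪α, y⟫) ⁻¹' B
  have hS : MeasurableSet S := (measurable_const.inner measurable_id) hB
  have hRα : R α = α := Submodule.reflection_mem_subspace_eq_self
    (Submodule.mem_orthogonal_singleton_iff_inner_right.mpr (by rwa [real_inner_comm]))
  have hRw : R w = -w := Submodule.reflection_orthogonalComplement_singleton_eq_neg w
  have hRS : ∀ y, R y ∈ S ↔ y ∈ S := fun y => by
    simp only [S, Set.mem_preimage, ← Submodule.inner_reflection_left_eq_right, R, hRα]
  change ∫ ω in Y ⁻¹' S, ⟪w, Y ω⟫ ∂μ = 0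
  rw [← integral_indicator (hY hS)]
  refine hsph.integral_comp_eq_zero_of_odd hY R (F := S.indicator fun y => ⟪w, y⟫)
    ((measurable_const.inner measurable_id).indicator hS).stronglyMeasurable fun y => ?_
  by_cases hy : y ∈ S
  · rw [Set.indicator_of_mem hy, Set.indicator_of_mem ((hRS y).mpr hy),
      ← Submodule.inner_reflection_left_eq_right, hRw, inner_neg_left]
  · rw [Set.indicator_of_notMem hy, Set.indicator_of_notMem (mt (hRS y).mp hy), neg_zero]

theorem condExp_comap_inner_ae_eq [IsFiniteMeasure μ] (hsph : IsSphericallySymmetric μ Y)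
    (hY : Measurable Y) (hYint : Integrable Y μ) (α : EuclideanSpace ℝ (Fin d)) :
    μ[Y | MeasurableSpace.comap (fun ω => ⟪α, Y ω⟫) inferInstance]
      =ᵐ[μ] fun ω => (ℝ ∙ α).starProjection (Y ω) := by
  set P := (ℝ ∙ α).starProjection
  have hf : Measurable fun ω => ⟪α, Y ω⟫ := measurable_const.inner hY
  have hPY : Integrable (fun ω => P (Y ω)) μ := P.integrable_comp hYint
  refine (ae_eq_condExp_of_forall_setIntegral_eq hf.comap_le hYint
    (fun _ _ _ => hPY.integrableOn) ?_ ?_).symm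
  · rintro _ ⟨B, hB, rfl⟩ -
    rw [← sub_eq_zero, ← integral_sub hPY.integrableOn hYint.integrableOn]
    refine integral_eq_zero_of_forall_integral_inner_eq_zero ℝ _ (hPY.sub hYint).integrableOn
      fun v => ?_
    have hperp : ⟪α, v - P v⟫ = 0 := Submodule.mem_orthogonal_singleton_iff_inner_right.mp
      ((ℝ ∙ α).sub_starProjection_mem_orthogonal v)
    have hinner : ∀ y, ⟪v, P y - y⟫ = -⟪v - P v, y⟫ := fun y => by
      rw [inner_sub_right, inner_sub_left, ← Submodule.inner_starProjection_left_eq_right]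
      ring
    simp_rw [hinner, integral_neg, hsph.setIntegral_inner_eq_zero_of_inner_eq_zero hY hperp hB,
      neg_zero]
  · have hP : (fun ω => P (Y ω)) = (fun t : ℝ => (t / ‖α‖ ^ 2) • α) ∘ fun ω => ⟪α, Y ω⟫ := by
      funext ω
      simp [P, Submodule.starProjection_singleton]
    rw [hP]
    exact ((continuous_id.div_const _).smul continuous_const).measurable.comp
      (comap_measurable _) |>.aestronglyMeasurable

end IsSphericallySymmetric

theorem stmt11_general {Ω : Type*} [MeasureSpace Ω] [IsProbabilityMeasure (ℙ : Measure Ω)]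
    {d : ℕ} (X Y : Ω → EuclideanSpace ℝ (Fin d)) (hY : Measurable Y)
    (μ₀ : EuclideanSpace ℝ (Fin d))
    (T : EuclideanSpace ℝ (Fin d) →L[ℝ] EuclideanSpace ℝ (Fin d))
    (hTsymm : ∀ x y, ⟪T x, y⟫ = ⟪x, T y⟫)
    (hXY : ∀ ω, X ω = μ₀ + T (Y ω))
    (hsph : IsSphericallySymmetric ℙ Y)
    (hmom : Integrable (fun ω => ‖Y ω‖ ^ 2) ℙ)
    (β : EuclideanSpace ℝ (Fin d)) :
    (ℙ : Measure Ω)[X | MeasurableSpace.comap (fun ω => ⟪β, X ω⟫) (borel ℝ)]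
      =ᵐ[ℙ] fun ω => μ₀ + (⟪β, X ω - μ₀⟫ / ⟪β, T (T β)⟫) • T (T β) := by
  obtain rfl : X = fun ω => T (Y ω) + μ₀ := funext fun ω => (hXY ω).trans (add_comm _ _)
  have hYint : Integrable Y ℙ :=
    ((memLp_two_iff_integrable_sq_norm hY.aestronglyMeasurable).mpr hmom).integrable one_le_two
  have hβX : (fun ω => ⟪β, T (Y ω) + μ₀⟫)
      = MeasurableEquiv.addRight (⟪β, μ₀⟫ : ℝ) ∘ fun ω => ⟪T β, Y ω⟫ := by
    funext ω
    simp [inner_add_right, hTsymm]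
  have hm : MeasurableSpace.comap (fun ω => ⟪T β, Y ω⟫) inferInstance ≤ _ :=
    (measurable_const.inner hY).comap_le
  rw [← BorelSpace.measurable_eq, hβX, MeasurableEquiv.comap_comp_eq]
  filter_upwards [(T.comp_condExp_add_const_comm hm hYint μ₀).symm,
    hsph.condExp_comap_inner_ae_eq hY hYint (T β)] with ω hcomm hproj
  rw [hcomm, hproj, Submodule.starProjection_singleton, add_sub_cancel_right, add_comm,
    ← hTsymm, ← hTsymm, real_inner_self_eq_norm_sq, map_smul]
  rfl

/-- If `X = μ₀ + Σ₀^{1/2} Y` is elliptically symmetric with mean `μ₀` and nonsingular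
covariance `Σ₀ = T ∘ T` (where `T = Σ₀^{1/2}` is symmetric positive definite and `Y` is
spherically symmetric with identity covariance), then for `β` with `β⊤Σ₀β ≠ 0`,
`E[X | β⊤X] = μ₀ + (β⊤(X − μ₀)/(β⊤Σ₀β)) Σ₀β` almost surely. -/
theorem stmt11 {Ω : Type*} [MeasureSpace Ω] [IsProbabilityMeasure (ℙ : Measure Ω)]
    {d : ℕ} (X Y : Ω → EuclideanSpace ℝ (Fin d)) (hY : Measurable Y)
    (μ₀ : EuclideanSpace ℝ (Fin d))
    (T : EuclideanSpace ℝ (Fin d) →L[ℝ] EuclideanSpace ℝ (Fin d))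
    (hTsymm : ∀ x y, ⟪T x, y⟫ = ⟪x, T y⟫)
    (hTpos : ∀ x, x ≠ 0 → 0 < ⟪T x, x⟫)
    (hXY : ∀ ω, X ω = μ₀ + T (Y ω))
    (hsph : IsSphericallySymmetric ℙ Y)
    (hmom : Integrable (fun ω => ‖Y ω‖ ^ 2) ℙ)
    (hcov : ∀ a b : EuclideanSpace ℝ (Fin d), ∫ ω, ⟪a, Y ω⟫ * ⟪b, Y ω⟫ ∂ℙ = ⟪a, b⟫)
    (β : EuclideanSpace ℝ (Fin d)) (hβ : ⟪β, T (T β)⟫ ≠ 0) :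
    (ℙ : Measure Ω)[X | MeasurableSpace.comap (fun ω => ⟪β, X ω⟫) (borel ℝ)]
      =ᵐ[ℙ] fun ω => μ₀ + (⟪β, X ω - μ₀⟫ / ⟪β, T (T β)⟫) • T (T β) :=
  stmt11_general X Y hY μ₀ T hTsymm hXY hsph hmom β
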